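/- The discrepancy triple of an ensemble after applying a strong arbitrage depends only on the discrepancy triple before: D(R Â^{(i)}) = D(R) G^{(i)}, where G^{(i)} is an explicit 3×3 integer matrix; for example for Â^{(1)} (setting r_DE := r_DP/r_EP), one has D(R Â^{(1)}) = (0, d2 − d1, d3) where D(R) = (d1, d2, d3). -/
import Mathlib


set_option linter.unnecessarySeqFocus false

open Real Matrix

/-- The discrepancy triple `D(R) = (d1, d2, d3)` of an ensemble
`R = (r_DE, r_DP, r_DY, r_EP, r_EY, r_PY)`:
`d1 = log r_EP − log r_DP + log r_DE`, `d2 = log r_EY − log r_DY + log r_DE`,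
`d3 = log r_PY − log r_DY + log r_DP`. -/
noncomputable def discrep (R : Fin 6 → ℝ) : Fin 3 → ℝ :=
  ![log (R 3) - log (R 1) + log (R 0),
    log (R 4) - log (R 2) + log (R 0),
    log (R 5) - log (R 2) + log (R 1)]

/-- The strong arbitrage `Â⁽¹⁾`: replaces `r_DE` by `r_DP / r_EP`. -/
noncomputable def strongA1 (R : Fin 6 → ℝ) : Fin 6 → ℝ :=
  Function.update R 0 (R 1 / R 3)

/-- The 3×3 integer matrix `G⁽¹⁾` (over ℝ), acting on row vectors on the right. -/
def G1 : Matrix (Fin 3) (Fin 3) ℝ := !![0, -1, 0; 0, 1, 0; 0, 0, 1]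

/-- The discrepancy triple after applying the strong arbitrage `Â⁽¹⁾` depends only on the
discrepancy triple before: `D(R Â⁽¹⁾) = D(R) G⁽¹⁾`; explicitly, if `D(R) = (d1, d2, d3)`
then `D(R Â⁽¹⁾) = (0, d2 − d1, d3)`. -/
theorem stmt7 (R : Fin 6 → ℝ) (hpos : ∀ i, 0 < R i) :
    discrep (strongA1 R) = Matrix.vecMul (discrep R) G1 ∧
    discrep (strongA1 R) = ![0, discrep R 1 - discrep R 0, discrep R 2] := by
  have h1 : (R 1) ≠ 0 := (hpos 1).ne'
  have h3 : (R 3) ≠ 0 := (hpos 3).ne'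
  have hlog : log (R 1 / R 3) = log (R 1) - log (R 3) := Real.log_div h1 h3
  have key : discrep (strongA1 R) = ![0, discrep R 1 - discrep R 0, discrep R 2] := by
    funext i
    fin_cases i <;>
      (simp [discrep, strongA1, Function.update, hlog] <;> ring)
  refine ⟨?_, key⟩
  rw [key]
  funext i
  fin_cases i <;>
    (simp [G1, Matrix.vecMul, dotProduct, Fin.sum_univ_three, discrep] <;> ring)
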